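/- With the same setup, W₁ᴴ := (Π^{†∘} ∘ (W₀ᴴA₁V₀)) W₀ᴴ solves the left Sylvester equation W₁ᴴA₀ − Λ₀W₁ᴴ = Λ₁W₀ᴴ − W₀ᴴA₁. -/

import Mathlib

/-! Conjugating by `V₀` turns the equation into one for `H := Π^{†∘} ∘ M`, `M := W₀ᴴA₁V₀`:
since `W₀ᴴV₀ = 1` forces `V₀W₀ᴴ = 1`, we have `Y A₀ = H Λ₀ W₀ᴴ` and `W₀ᴴ A₁ = M W₀ᴴ`.
The commutator `H Λ₀ − Λ₀ H` has entries `H i j (λⱼ − λᵢ)`, which is `−M i j` off the diagonal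
and `0` on it, i.e. it equals `Diag M − M`. -/

open Matrix

variable {ι K : Type*} [Fintype ι] [DecidableEq ι] [Field K]

theorem mul_diagonal_sub_diagonal_mul_apply (H : Matrix ι ι K) (l : ι → K) (i j : ι) :
    (H * diagonal l - diagonal l * H) i j = H i j * (l j - l i) := by
  simp only [Matrix.sub_apply, mul_diagonal, diagonal_mul]
  ring

theorem hadamard_inv_sub_mul_diagonal_sub_diagonal_mul {l : ι → K} (hl : Function.Injective l)
    (M : Matrix ι ι K) :
    (of (fun i j => if i = j then 0 else (l i - l j)⁻¹) ⊙ M) * diagonal l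
      - diagonal l * (of (fun i j => if i = j then 0 else (l i - l j)⁻¹) ⊙ M)
      = diagonal (fun i => M i i) - M := by
  ext i j
  rw [mul_diagonal_sub_diagonal_mul_apply]
  by_cases hij : i = j
  · subst hij
    simp
  · have hgap : l i - l j ≠ 0 := sub_ne_zero.mpr (hl.ne hij)
    simp only [hadamard_apply, of_apply, if_neg hij, Matrix.sub_apply, diagonal_apply_ne _ hij]
    field_simp
    ring

theorem mul_eq_mul_mul_mul_of_mul_eq_one {W V : Matrix ι ι K} (hWV : W * V = 1)
    (A : Matrix ι ι K) : W * A = W * A * V * W := by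
  rw [Matrix.mul_assoc _ V, mul_eq_one_comm.mp hWV, Matrix.mul_one]

theorem mul_mul_conj_of_mul_eq_one {W V : Matrix ι ι K} (hWV : W * V = 1)
    (H D : Matrix ι ι K) : H * W * (V * D * W) = H * D * W := by
  simp only [Matrix.mul_assoc]
  rw [← Matrix.mul_assoc W, hWV, Matrix.one_mul]

theorem stmt_11 {n : ℕ} (V₀ W₀ A₁ : Matrix (Fin n) (Fin n) ℂ) (l : Fin n → ℂ)
    (hWV : W₀ᴴ * V₀ = 1) (hl : Function.Injective l)
    (Λ₀ A₀ Λ₁ Pid Y : Matrix (Fin n) (Fin n) ℂ)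
    (hΛ₀ : Λ₀ = Matrix.diagonal l)
    (hA₀ : A₀ = V₀ * Λ₀ * W₀ᴴ)
    (hΛ₁ : Λ₁ = Matrix.diagonal (fun i => (W₀ᴴ * A₁ * V₀) i i))
    (hPi : Pid = Matrix.of fun i j => if i = j then 0 else (l i - l j)⁻¹)
    (hY : Y = Matrix.hadamard Pid (W₀ᴴ * A₁ * V₀) * W₀ᴴ) :
    Y * A₀ - Λ₀ * Y = Λ₁ * W₀ᴴ - W₀ᴴ * A₁ := by
  subst hΛ₀ hA₀ hΛ₁ hPi hY
  set M := W₀ᴴ * A₁ * V₀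
  set H := (of fun i j => if i = j then 0 else (l i - l j)⁻¹) ⊙ M
  calc H * W₀ᴴ * (V₀ * diagonal l * W₀ᴴ) - diagonal l * (H * W₀ᴴ)
      = (H * diagonal l - diagonal l * H) * W₀ᴴ := by
        rw [mul_mul_conj_of_mul_eq_one hWV, Matrix.sub_mul, Matrix.mul_assoc, Matrix.mul_assoc]
    _ = (diagonal (fun i => M i i) - M) * W₀ᴴ := by
        rw [hadamard_inv_sub_mul_diagonal_sub_diagonal_mul hl]
    _ = diagonal (fun i => M i i) * W₀ᴴ - W₀ᴴ * A₁ := by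
        rw [Matrix.sub_mul, mul_eq_mul_mul_mul_of_mul_eq_one hWV A₁]
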